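/- Noisy matrix recovery error bound: Suppose X ∈ R^{N1×N2} is s-sparse, U1, U2 satisfy RIP_{2s} with constant δ_{2s} ∈ (0, √2 − 1), and Y' = U1 X U2^T + E with ||E||_F ≤ ε. If recovery is performed columnwise by relaxed ℓ1-minimization (first recovering columns of X U2^T with tolerance ε, then rows of X with tolerance √m2 · C2 · ε), then the recovered matrix X̂ satisfies ||X̂ − X||_F ≤ √(m2 N1) · C2^2 · ε, where C2 = 4√(1+δ_{2s}) / (1 − (1+√2)δ_{2s}). -/

import Mathlib

/-!
Put `B = X U2ᵀ`. The columns of `B` are `s`-sparse and `U1 B = U1 X U2ᵀ`, so column by column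
the first stage is noisy compressed sensing of `B` with noise the columns of `E`: each column of
`Z` is within `C2 ε` of that of `B`, whence `‖Z - B‖_F ≤ √m2 C2 ε`. The rows of `X` are `s`-sparse
and `U2` maps them to the rows of `B`, which lie within `‖Z - B‖_F` of the rows of `Z`, so the
second stage puts each row of `X̂` within `C2 √m2 C2 ε` of that of `X`; summing over the `N1` rows
gives the bound.
-/

def SparseVec {n : ℕ} (s : ℕ) (x : Fin n → ℝ) : Prop :=
  (Finset.univ.filter fun i => x i ≠ 0).card ≤ s

def SparseMat {n1 n2 : ℕ} (s : ℕ) (X : Matrix (Fin n1) (Fin n2) ℝ) : Prop :=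
  (Finset.univ.filter fun p : Fin n1 × Fin n2 => X p.1 p.2 ≠ 0).card ≤ s

noncomputable def l2 {n : ℕ} (v : Fin n → ℝ) : ℝ := Real.sqrt (∑ i, (v i) ^ 2)

noncomputable def frob {m n : ℕ} (A : Matrix (Fin m) (Fin n) ℝ) : ℝ :=
  Real.sqrt (∑ i, ∑ j, (A i j) ^ 2)

def RIP {m n : ℕ} (s : ℕ) (δ : ℝ) (A : Matrix (Fin m) (Fin n) ℝ) : Prop :=
  ∀ x : Fin n → ℝ, SparseVec s x →
    (1 - δ) * l2 x ≤ l2 (A.mulVec x) ∧ l2 (A.mulVec x) ≤ (1 + δ) * l2 x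

lemma l2_nonneg {n : ℕ} (v : Fin n → ℝ) : 0 ≤ l2 v := Real.sqrt_nonneg _

lemma l2_sq {n : ℕ} (v : Fin n → ℝ) : l2 v ^ 2 = ∑ i, v i ^ 2 :=
  Real.sq_sqrt (Finset.sum_nonneg fun _ _ => sq_nonneg _)

lemma l2_sub_comm {n : ℕ} (v w : Fin n → ℝ) : l2 (v - w) = l2 (w - v) := by
  simp only [l2, ← neg_sub w v, Pi.neg_apply, neg_sq]

lemma frob_transpose {m n : ℕ} (M : Matrix (Fin m) (Fin n) ℝ) : frob M.transpose = frob M := by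
  simp only [frob, Matrix.transpose_apply]
  rw [Finset.sum_comm]

lemma l2_row_le_frob {m n : ℕ} (M : Matrix (Fin m) (Fin n) ℝ) (i : Fin m) :
    l2 (M i) ≤ frob M :=
  Real.sqrt_le_sqrt <| Finset.single_le_sum
    (f := fun i => ∑ j, M i j ^ 2) (fun _ _ => Finset.sum_nonneg fun _ _ => sq_nonneg _)
    (Finset.mem_univ i)

lemma l2_col_le_frob {m n : ℕ} (M : Matrix (Fin m) (Fin n) ℝ) (j : Fin n) :
    l2 (fun i => M i j) ≤ frob M :=
  frob_transpose M ▸ l2_row_le_frob M.transpose j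

lemma frob_le_sqrt_mul_of_l2_row_le {m n : ℕ} (M : Matrix (Fin m) (Fin n) ℝ) {c : ℝ}
    (h : ∀ i, l2 (M i) ≤ c) : frob M ≤ Real.sqrt m * c := by
  rcases Nat.eq_zero_or_pos m with rfl | hm
  · simp [frob]
  have hc : 0 ≤ c := (l2_nonneg _).trans (h ⟨0, hm⟩)
  calc frob M = Real.sqrt (∑ i, l2 (M i) ^ 2) := by simp only [frob, l2_sq]
    _ ≤ Real.sqrt (∑ _i : Fin m, c ^ 2) :=
        Real.sqrt_le_sqrt <| Finset.sum_le_sum fun i _ => pow_le_pow_left₀ (l2_nonneg _) (h i) 2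
    _ = Real.sqrt m * c := by
        rw [Finset.sum_const, Finset.card_univ, Fintype.card_fin, nsmul_eq_mul,
          Real.sqrt_mul (Nat.cast_nonneg _), Real.sqrt_sq hc]

lemma frob_le_sqrt_mul_of_l2_col_le {m n : ℕ} (M : Matrix (Fin m) (Fin n) ℝ) {c : ℝ}
    (h : ∀ j, l2 (fun i => M i j) ≤ c) : frob M ≤ Real.sqrt n * c :=
  frob_transpose M ▸ frob_le_sqrt_mul_of_l2_row_le M.transpose h

lemma SparseMat.sparseVec_row {n1 n2 s : ℕ} {X : Matrix (Fin n1) (Fin n2) ℝ}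
    (hX : SparseMat s X) (i : Fin n1) : SparseVec s (X i) := by
  refine le_trans (Finset.card_le_card_of_injOn (fun j => (i, j)) ?_ ?_) hX
  · intro j hj
    simpa using hj
  · intro a _ b _ hab
    simpa using hab

lemma SparseMat.sparseVec_mul_col {n1 n2 n3 s : ℕ} {X : Matrix (Fin n1) (Fin n2) ℝ}
    (hX : SparseMat s X) (B : Matrix (Fin n2) (Fin n3) ℝ) (k : Fin n3) :
    SparseVec s (fun i => (X * B) i k) := by
  have hsupp : (Finset.univ.filter fun i => (X * B) i k ≠ 0) ⊆
      (Finset.univ.filter fun p : Fin n1 × Fin n2 => X p.1 p.2 ≠ 0).image Prod.fst := by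
    intro i hi
    have hi' : ∑ j, X i j * B j k ≠ 0 := (Finset.mem_filter.1 hi).2
    obtain ⟨j, -, hj⟩ := Finset.exists_ne_zero_of_sum_ne_zero hi'
    simp only [Finset.mem_image, Finset.mem_filter, Finset.mem_univ, true_and]
    exact ⟨(i, j), left_ne_zero_of_mul hj, rfl⟩
  exact (Finset.card_le_card hsupp).trans (Finset.card_image_le.trans hX)

theorem noisy_matrix_recovery_bound_general {N1 N2 m1 m2 s : ℕ} {δ ε C2 : ℝ}
    (X : Matrix (Fin N1) (Fin N2) ℝ) (hX : SparseMat s X)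
    (U1 : Matrix (Fin m1) (Fin N1) ℝ) (U2 : Matrix (Fin m2) (Fin N2) ℝ)
    (hU1 : RIP (2 * s) δ U1) (hU2 : RIP (2 * s) δ U2)
    (E : Matrix (Fin m1) (Fin m2) ℝ) (hE : frob E ≤ ε)
    (Y' : Matrix (Fin m1) (Fin m2) ℝ) (hY' : Y' = U1 * X * U2.transpose + E)
    -- the basic noisy CS recovery result, assumed as a hypothesis:
    (hCS : ∀ (m n : ℕ) (A : Matrix (Fin m) (Fin n) ℝ), RIP (2 * s) δ A →
      ∀ (x f : Fin n → ℝ) (y : Fin m → ℝ) (ε' : ℝ),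
        SparseVec s x → l2 (A.mulVec x - y) ≤ ε' →
        l2 (A.mulVec f - y) ≤ ε' →
        (∀ g : Fin n → ℝ, l2 (A.mulVec g - y) ≤ ε' → ∑ i, |f i| ≤ ∑ i, |g i|) →
        l2 (f - x) ≤ C2 * ε')
    -- first stage: columns of `Z` are relaxed ℓ1-minimizers with tolerance ε
    (Z : Matrix (Fin N1) (Fin m2) ℝ)
    (hZfeas : ∀ q, l2 (U1.mulVec (fun i => Z i q) - fun p => Y' p q) ≤ ε)
    (hZmin : ∀ q, ∀ g : Fin N1 → ℝ,
      l2 (U1.mulVec g - fun p => Y' p q) ≤ ε → ∑ i, |Z i q| ≤ ∑ i, |g i|)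
    -- second stage: rows of `X̂` are relaxed ℓ1-minimizers with tolerance √m2·C2·ε
    (Xhat : Matrix (Fin N1) (Fin N2) ℝ)
    (hXfeas : ∀ p, l2 (U2.mulVec (fun j => Xhat p j) - fun q => Z p q) ≤
      Real.sqrt m2 * C2 * ε)
    (hXmin : ∀ p, ∀ g : Fin N2 → ℝ,
      l2 (U2.mulVec g - fun q => Z p q) ≤ Real.sqrt m2 * C2 * ε →
      ∑ j, |Xhat p j| ≤ ∑ j, |g j|) :
    frob (Xhat - X) ≤ Real.sqrt ((m2 : ℝ) * (N1 : ℝ)) * C2 ^ 2 * ε := by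
  set B := X * U2.transpose
  have hB_col : ∀ q, l2 (U1.mulVec (fun i => B i q) - fun p => Y' p q) ≤ ε := fun q => by
    have hY'_col : (fun p => Y' p q) = U1.mulVec (fun i => B i q) + fun p => E p q := by
      rw [hY', Matrix.mul_assoc]
      rfl
    rw [l2_sub_comm, hY'_col, add_sub_cancel_left]
    exact (l2_col_le_frob E q).trans hE
  have hZ_col : ∀ q, l2 ((fun i => Z i q) - fun i => B i q) ≤ C2 * ε := fun q =>
    hCS _ _ U1 hU1 _ _ _ ε (hX.sparseVec_mul_col _ q) (hB_col q) (hZfeas q) (hZmin q)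
  have hZB : frob (Z - B) ≤ Real.sqrt m2 * C2 * ε :=
    mul_assoc (Real.sqrt m2) C2 ε ▸ frob_le_sqrt_mul_of_l2_col_le (Z - B) hZ_col
  have hX_row : ∀ p, l2 (U2.mulVec (X p) - Z p) ≤ Real.sqrt m2 * C2 * ε := fun p => by
    rw [← Matrix.vecMul_transpose, l2_sub_comm]
    exact (l2_row_le_frob (Z - B) p).trans hZB
  have hXhat_row : ∀ p, l2 (Xhat p - X p) ≤ C2 * (Real.sqrt m2 * C2 * ε) := fun p =>
    hCS _ _ U2 hU2 _ _ _ _ (hX.sparseVec_row p) (hX_row p) (hXfeas p) (hXmin p)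
  calc frob (Xhat - X) ≤ Real.sqrt N1 * (C2 * (Real.sqrt m2 * C2 * ε)) :=
        frob_le_sqrt_mul_of_l2_row_le (Xhat - X) hXhat_row
    _ = Real.sqrt ((m2 : ℝ) * (N1 : ℝ)) * C2 ^ 2 * ε := by
        rw [Real.sqrt_mul (Nat.cast_nonneg _)]
        ring

/-- Noisy matrix recovery error bound for serial relaxed ℓ1-minimization:
with `X` `s`-sparse, `U1, U2` satisfying RIP of order `2s` with constant
`δ ∈ (0, √2 - 1)`, noisy measurements `Y' = U1 X U2ᵀ + E`, `‖E‖_F ≤ ε`, and the basic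
noisy compressive sensing bound assumed as a hypothesis, the two-stage columnwise/
rowwise relaxed ℓ1 recovery `X̂` satisfies `‖X̂ - X‖_F ≤ √(m2 N1) C2² ε` where
`C2 = 4√(1+δ)/(1-(1+√2)δ)`. -/
theorem noisy_matrix_recovery_bound {N1 N2 m1 m2 s : ℕ} {δ ε C2 : ℝ}
    (hδ0 : 0 < δ) (hδ : δ < Real.sqrt 2 - 1)
    (hC2 : C2 = 4 * Real.sqrt (1 + δ) / (1 - (1 + Real.sqrt 2) * δ))
    (X : Matrix (Fin N1) (Fin N2) ℝ) (hX : SparseMat s X)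
    (U1 : Matrix (Fin m1) (Fin N1) ℝ) (U2 : Matrix (Fin m2) (Fin N2) ℝ)
    (hU1 : RIP (2 * s) δ U1) (hU2 : RIP (2 * s) δ U2)
    (E : Matrix (Fin m1) (Fin m2) ℝ) (hE : frob E ≤ ε)
    (Y' : Matrix (Fin m1) (Fin m2) ℝ) (hY' : Y' = U1 * X * U2.transpose + E)
    -- the basic noisy CS recovery result, assumed as a hypothesis:
    (hCS : ∀ (m n : ℕ) (A : Matrix (Fin m) (Fin n) ℝ), RIP (2 * s) δ A →
      ∀ (x f : Fin n → ℝ) (y : Fin m → ℝ) (ε' : ℝ),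
        SparseVec s x → l2 (A.mulVec x - y) ≤ ε' →
        l2 (A.mulVec f - y) ≤ ε' →
        (∀ g : Fin n → ℝ, l2 (A.mulVec g - y) ≤ ε' → ∑ i, |f i| ≤ ∑ i, |g i|) →
        l2 (f - x) ≤ C2 * ε')
    -- first stage: columns of `Z` are relaxed ℓ1-minimizers with tolerance ε
    (Z : Matrix (Fin N1) (Fin m2) ℝ)
    (hZfeas : ∀ q, l2 (U1.mulVec (fun i => Z i q) - fun p => Y' p q) ≤ ε)
    (hZmin : ∀ q, ∀ g : Fin N1 → ℝ,
      l2 (U1.mulVec g - fun p => Y' p q) ≤ ε → ∑ i, |Z i q| ≤ ∑ i, |g i|)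
    -- second stage: rows of `X̂` are relaxed ℓ1-minimizers with tolerance √m2·C2·ε
    (Xhat : Matrix (Fin N1) (Fin N2) ℝ)
    (hXfeas : ∀ p, l2 (U2.mulVec (fun j => Xhat p j) - fun q => Z p q) ≤
      Real.sqrt m2 * C2 * ε)
    (hXmin : ∀ p, ∀ g : Fin N2 → ℝ,
      l2 (U2.mulVec g - fun q => Z p q) ≤ Real.sqrt m2 * C2 * ε →
      ∑ j, |Xhat p j| ≤ ∑ j, |g j|) :
    frob (Xhat - X) ≤ Real.sqrt ((m2 : ℝ) * (N1 : ℝ)) * C2 ^ 2 * ε :=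
  noisy_matrix_recovery_bound_general X hX U1 U2 hU1 hU2 E hE Y' hY' hCS Z hZfeas hZmin Xhat hXfeas
    hXmin
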